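/- arXiv:0710.2506 — 2 statements merged into one kernel-verified Lean document; each statement's English description precedes it below -/
import Mathlib

section
/- Let T > 0 and let (m̃_k)_{k ≥ 1} be a sequence in L²((0, T)). Suppose (y_α)_{α} is a family of functions in L²((0, T)), indexed by multi-indices α, satisfying for every multi-index α and almost every t ∈ (0, T): y_α(t) = Σ_{k ≥ 1} √(α_k) ∫_0^t y_{α−ε_k}(s) m̃_k(s) ds (the sum has only finitely many non-zero terms since √(α_k) = 0 unless α_k ≥ 1). Then y_α = 0 almost everywhere on (0, T) for every multi-index α. In particular, the solution of the Itô–Skorokhod equation u(t) = 1 + 𝔛_t^⋄(u) is unique in L²((0, T); L²(Ω)), since the chaos coefficients of the difference of two solutions satisfy this homogeneous system. -/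
/-! The right-hand side for `α` only involves the coefficients `y_{α-ε_k}` with `α_k ≥ 1`,
which are strictly below `α` in the well-founded pointwise order on multi-indices; so
well-founded induction shows that all the integrals on the right vanish. -/

open MeasureTheory Set

theorem Finsupp.tsub_single_one_lt {ι : Type*} {α : ι →₀ ℕ} {k : ι} (hk : k ∈ α.support) :
    α - Finsupp.single k 1 < α := by
  refine tsub_le_self.lt_of_ne fun h => ?_
  have h_k := DFunLike.congr_fun h k
  simp only [Finsupp.coe_tsub, Pi.sub_apply, Finsupp.single_eq_same] at h_k
  have := Finsupp.mem_support_iff.1 hk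
  omega

theorem setIntegral_mul_eq_zero_of_ae_restrict {X : Type*} [MeasurableSpace X] {μ : Measure X}
    {s t : Set X} {f g : X → ℝ} (hst : s ⊆ t) (hf : ∀ᵐ x ∂μ.restrict t, f x = 0) :
    ∫ x in s, f x * g x ∂μ = 0 := by
  refine integral_eq_zero_of_ae ?_
  filter_upwards [ae_restrict_of_ae_restrict_of_subset hst hf] with x hx
  simp [hx]

theorem propagator_system_uniqueness_general
    (T : ℝ) (mt : ℕ → ℝ → ℝ)
    (y : (ℕ →₀ ℕ) → ℝ → ℝ)
    (hsys : ∀ α : ℕ →₀ ℕ, ∀ᵐ t ∂(volume.restrict (Ioo 0 T)),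
      y α t = ∑ k ∈ α.support, Real.sqrt (α k) *
        ∫ s in Ioo 0 t, y (α - Finsupp.single k 1) s * mt k s) :
    ∀ α : ℕ →₀ ℕ, ∀ᵐ t ∂(volume.restrict (Ioo 0 T)), y α t = 0 := by
  intro α
  induction α using WellFoundedLT.induction with
  | _ α ih =>
    filter_upwards [hsys α, ae_restrict_mem measurableSet_Ioo] with t ht htT
    rw [ht]
    refine Finset.sum_eq_zero fun k hk => ?_
    have h_lower := ih _ (Finsupp.tsub_single_one_lt hk)
    rw [setIntegral_mul_eq_zero_of_ae_restrict (Ioo_subset_Ioo_right htT.2.le) h_lower, mul_zero]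

/-- Uniqueness for the homogeneous propagator system: if the chaos
coefficients `y_α ∈ L²((0,T))` satisfy, for a.e. `t ∈ (0,T)`,
`y_α(t) = Σ_k √(α_k) ∫_0^t y_{α−ε_k}(s) m̃_k(s) ds` (a finite sum over the support of
`α`, the empty sum for the zero multi-index), then every `y_α` vanishes a.e. In
particular the solution of the Itô–Skorokhod equation `u(t) = 1 + 𝔛_t^⋄(u)` is unique
in `L²((0,T); L²(Ω))`. -/
theorem propagator_system_uniqueness
    (T : ℝ) (hT : 0 < T) (mt : ℕ → ℝ → ℝ)
    (hmt : ∀ k, MemLp (mt k) 2 (volume.restrict (Ioo 0 T)))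
    (y : (ℕ →₀ ℕ) → ℝ → ℝ)
    (hy : ∀ α, MemLp (y α) 2 (volume.restrict (Ioo 0 T)))
    (hsys : ∀ α : ℕ →₀ ℕ, ∀ᵐ t ∂(volume.restrict (Ioo 0 T)),
      y α t = ∑ k ∈ α.support, Real.sqrt (α k) *
        ∫ s in Ioo 0 t, y (α - Finsupp.single k 1) s * mt k s) :
    ∀ α : ℕ →₀ ℕ, ∀ᵐ t ∂(volume.restrict (Ioo 0 T)), y α t = 0 :=
  propagator_system_uniqueness_general T mt y hsys
end

section
/- Let T > 0 and let (m̃_k)_{k ≥ 1} be a sequence in L²((0, T)). Define M̃_k(t) = ∫_0^t m̃_k(s) ds and, for each multi-index α, u_α(t) = (Π_{k ≥ 1} M̃_k(t)^{α_k}) / √(α!) (a finite product). Then u_𝟎(t) = 1 for the zero multi-index 𝟎, and for every multi-index α with |α| ≥ 1 and every t ∈ [0, T]: u_α(t) = Σ_{k ≥ 1} √(α_k) ∫_0^t u_{α−ε_k}(s) m̃_k(s) ds, where the sum has finitely many non-zero terms. In other words, the chaos coefficients of the Wick exponential e^{⋄X(t)} solve the propagator system of the Itô–Skorokhod equation u(t)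 = 1 + 𝔛_t^⋄(u). -/
/-!
Each `M̃_k` is absolutely continuous with a.e. derivative `m̃_k`, so by the product rule the
monomial `M̃^α = Π_k M̃_k^{α_k}` is absolutely continuous with a.e. derivative
`Σ_k α_k M̃^{α-ε_k} m̃_k`. Since `α! = α_k (α - ε_k)!`, dividing by `√α!` turns this into
`Σ_k √α_k u_{α-ε_k} m̃_k`, and the fundamental theorem of calculus for absolutely continuous
functions integrates it starting from `u_α(0) = 0`.
-/

open MeasureTheory Set

namespace Finsupp

variable {ι N : Type*} [CommMonoid N]

theorem prod_tsub_single_one (α : ι →₀ ℕ) (i : ι) (g : ι → ℕ → N) (hg : ∀ j, g j 0 = 1) :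
    (α - single i 1).prod g = g i (α i - 1) * (α.erase i).prod g := by
  rw [← mul_prod_erase' _ i g hg, tsub_apply, single_eq_same]
  congr 2
  ext j
  by_cases hj : j = i
  · simp [hj]
  · simp [erase_ne hj, Ne.symm hj]

theorem prod_factorial_eq_mul_prod_factorial_tsub_single_one {R : Type*} [CommSemiring R]
    (α : ι →₀ ℕ) (i : ι) (hi : α i ≠ 0) :
    α.prod (fun _ n => (n.factorial : R)) =
      α i * (α - single i 1).prod (fun _ n => (n.factorial : R)) := by
  rw [prod_tsub_single_one _ _ _ fun _ => Nat.cast_one, ← mul_assoc, ← Nat.cast_mul,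
    Nat.mul_factorial_pred hi]
  exact (mul_prod_erase' _ _ _ fun _ => Nat.cast_one).symm

end Finsupp

namespace AbsolutelyContinuousOnInterval

theorem congr {X : Type*} [PseudoMetricSpace X] {f g : ℝ → X} {a b : ℝ}
    (hf : AbsolutelyContinuousOnInterval f a b) (hfg : EqOn f g (uIcc a b)) :
    AbsolutelyContinuousOnInterval g a b := by
  refine hf.congr' (Filter.eventually_inf_principal.2 (Filter.Eventually.of_forall fun E hE => ?_))
  exact Finset.sum_congr rfl fun i hi => by rw [hfg (hE.1 i hi).1, hfg (hE.1 i hi).2]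

def submonoid (a b : ℝ) : Submonoid (ℝ → ℝ) where
  carrier := {f | AbsolutelyContinuousOnInterval f a b}
  mul_mem' := mul
  one_mem' := (LipschitzWith.const (1 : ℝ)).lipschitzOnWith.absolutelyContinuousOnInterval

theorem integral_eq_sub_of_ae_hasDerivAt {f f' : ℝ → ℝ} {a b : ℝ}
    (hf : AbsolutelyContinuousOnInterval f a b)
    (hf' : ∀ᵐ x, x ∈ uIcc a b → HasDerivAt f (f' x) x) :
    ∫ x in a..b, f' x = f b - f a := by
  rw [← hf.integral_deriv_eq_sub]
  refine intervalIntegral.integral_congr_ae ?_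
  filter_upwards [hf'] with x hx hxI using (hx (uIoc_subset_uIcc hxI)).deriv.symm

end AbsolutelyContinuousOnInterval

section Primitive

variable {m : ℝ → ℝ} {a t : ℝ}

theorem setIntegral_Ioo_eq_intervalIntegral (ht : a ≤ t) :
    ∫ s in Ioo a t, m s = ∫ s in a..t, m s := by
  rw [intervalIntegral.integral_of_le ht, integral_Ioc_eq_integral_Ioo]

theorem absolutelyContinuousOnInterval_setIntegral_Ioo (ht : a ≤ t)
    (hm : IntervalIntegrable m volume a t) :
    AbsolutelyContinuousOnInterval (fun y => ∫ s in Ioo a y, m s) a t :=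
  (hm.absolutelyContinuousOnInterval_intervalIntegral left_mem_uIcc).congr fun _ hy =>
    (setIntegral_Ioo_eq_intervalIntegral (uIcc_of_le ht ▸ hy).1).symm

theorem ae_hasDerivAt_setIntegral_Ioo (ht : a ≤ t) (hm : IntervalIntegrable m volume a t) :
    ∀ᵐ x, x ∈ uIcc a t → HasDerivAt (fun y => ∫ s in Ioo a y, m s) (m x) x := by
  -- left of `a` the two primitives differ (`0` versus `-∫`), so the point `x = a` is discarded
  filter_upwards [hm.ae_hasDerivAt_integral, volume.ae_ne a] with x hx hxa hxI
  have hax : a < x := lt_of_le_of_ne (uIcc_of_le ht ▸ hxI).1 (Ne.symm hxa)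
  refine (hx hxI a left_mem_uIcc).congr_of_eventuallyEq ?_
  filter_upwards [Ioi_mem_nhds hax] with y hy using setIntegral_Ioo_eq_intervalIntegral hy.le

end Primitive

section Monomial

variable {ι : Type*} {M : ι → ℝ → ℝ} {m : ι → ℝ} {x : ℝ}

theorem hasDerivAt_finsuppProd_pow (α : ι →₀ ℕ) (hM : ∀ k ∈ α.support, HasDerivAt (M k) (m k) x) :
    HasDerivAt (fun y => α.prod fun k n => M k y ^ n)
      (∑ k ∈ α.support, α k * (α - Finsupp.single k 1).prod (fun j n => M j x ^ n) * m k) x := by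
  classical
  have hprod := HasDerivAt.fun_finsetProd fun k hk => (hM k hk).pow (α k)
  refine hprod.congr_deriv (Finset.sum_congr rfl fun k hk => ?_)
  have herase : (α.erase k).prod (fun j n => M j x ^ n) = ∏ j ∈ α.support.erase k, M j x ^ α j := by
    rw [Finsupp.prod, Finsupp.support_erase]
    exact Finset.prod_congr rfl fun j hj => by rw [Finsupp.erase_ne (Finset.ne_of_mem_erase hj)]
  rw [Finsupp.prod_tsub_single_one _ _ _ fun _ => pow_zero _, herase]
  simp only [Pi.pow_apply, smul_eq_mul]
  ring

noncomputable def wickMonomial (M : ι → ℝ → ℝ) (α : ι →₀ ℕ) (t : ℝ) : ℝ :=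
  (α.prod fun k n => M k t ^ n) / √(α.prod fun _ n => (n.factorial : ℝ))

theorem hasDerivAt_wickMonomial (α : ι →₀ ℕ) (hM : ∀ k ∈ α.support, HasDerivAt (M k) (m k) x) :
    HasDerivAt (wickMonomial M α)
      (∑ k ∈ α.support, √(α k) * (wickMonomial M (α - Finsupp.single k 1) x * m k)) x := by
  refine ((hasDerivAt_finsuppProd_pow α hM).div_const _).congr_deriv ?_
  rw [Finset.sum_div]
  refine Finset.sum_congr rfl fun k hk => ?_
  have hαk : (0 : ℝ) < α k := Nat.cast_pos.2 (Nat.pos_of_ne_zero (Finsupp.mem_support_iff.1 hk))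
  have hfact : 0 < (α - Finsupp.single k 1).prod fun _ n => (n.factorial : ℝ) :=
    Finset.prod_pos fun _ _ => Nat.cast_pos.2 (Nat.factorial_pos _)
  rw [wickMonomial, Finsupp.prod_factorial_eq_mul_prod_factorial_tsub_single_one _ _
    (Finsupp.mem_support_iff.1 hk), Real.sqrt_mul hαk.le]
  have hsqrt_αk := Real.sqrt_pos.2 hαk
  have hsqrt_fact := Real.sqrt_pos.2 hfact
  field_simp
  rw [Real.sq_sqrt hαk.le]
  ring

theorem wickMonomial_zero (M : ι → ℝ → ℝ) (t : ℝ) : wickMonomial M 0 t = 1 := by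
  simp [wickMonomial]

theorem wickMonomial_eq_zero {α : ι →₀ ℕ} (hα : α ≠ 0) {t : ℝ} (hM : ∀ k, M k t = 0) :
    wickMonomial M α t = 0 := by
  obtain ⟨k, hk⟩ := Finsupp.support_nonempty_iff.2 hα
  rw [wickMonomial, Finsupp.prod,
    Finset.prod_eq_zero hk (by simp [hM, Finsupp.mem_support_iff.1 hk]), zero_div]

theorem absolutelyContinuousOnInterval_wickMonomial {a b : ℝ}
    (hM : ∀ k, AbsolutelyContinuousOnInterval (M k) a b) (α : ι →₀ ℕ) :
    AbsolutelyContinuousOnInterval (wickMonomial M α) a b := by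
  have hprod : α.prod (fun k n => M k ^ n) ∈ AbsolutelyContinuousOnInterval.submonoid a b :=
    SubmonoidClass.finsuppProd_mem _ α _ fun k _ => pow_mem (hM k) _
  change AbsolutelyContinuousOnInterval (∏ k ∈ α.support, M k ^ α k) a b at hprod
  rw [Finset.prod_fn] at hprod
  convert hprod.const_mul (√(α.prod fun _ n => (n.factorial : ℝ)))⁻¹ using 2 with t
  simp [wickMonomial, div_eq_inv_mul, Finsupp.prod]

end Monomial

theorem wick_exponential_solves_propagator_general
    (T : ℝ) (mt : ℕ → ℝ → ℝ)
    (hmt : ∀ k, MemLp (mt k) 2 (volume.restrict (Ioo 0 T)))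
    (Mt : ℕ → ℝ → ℝ) (hMt : ∀ k t, Mt k t = ∫ s in Ioo 0 t, mt k s)
    (u : (ℕ →₀ ℕ) → ℝ → ℝ)
    (hu : ∀ α t, u α t =
      (∏ k ∈ α.support, (Mt k t) ^ (α k)) /
        Real.sqrt (∏ k ∈ α.support, (Nat.factorial (α k) : ℝ))) :
    (∀ t : ℝ, u 0 t = 1) ∧
    (∀ α : ℕ →₀ ℕ, α ≠ 0 → ∀ t ∈ Icc (0 : ℝ) T,
      u α t = ∑ k ∈ α.support, Real.sqrt (α k) *
        ∫ s in Ioo 0 t, u (α - Finsupp.single k 1) s * mt k s) := by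
  obtain rfl : u = wickMonomial Mt := funext fun α => funext (hu α)
  refine ⟨wickMonomial_zero Mt, fun α hα t ht => ?_⟩
  have hm : ∀ k, IntervalIntegrable (mt k) volume 0 t := fun k =>
    (intervalIntegrable_iff_integrableOn_Ioo_of_le ht.1).2 <|
      IntegrableOn.mono_set ((hmt k).integrable one_le_two) (Ioo_subset_Ioo_right ht.2)
  have hMt' : ∀ k, Mt k = fun y => ∫ s in Ioo 0 y, mt k s := fun k => funext (hMt k)
  have hMac : ∀ k, AbsolutelyContinuousOnInterval (Mt k) 0 t := fun k =>
    hMt' k ▸ absolutelyContinuousOnInterval_setIntegral_Ioo ht.1 (hm k)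
  have hderiv : ∀ᵐ x, x ∈ uIcc 0 t → HasDerivAt (wickMonomial Mt α)
      (∑ k ∈ α.support, √(α k) * (wickMonomial Mt (α - Finsupp.single k 1) x * mt k x)) x := by
    filter_upwards [ae_all_iff.2 fun k => hMt' k ▸ ae_hasDerivAt_setIntegral_Ioo ht.1 (hm k)]
      with x hx hxI
    exact hasDerivAt_wickMonomial α fun k _ => hx k hxI
  have hFTC :=
    (absolutelyContinuousOnInterval_wickMonomial hMac α).integral_eq_sub_of_ae_hasDerivAt hderiv
  rw [wickMonomial_eq_zero hα (t := 0) fun k => by simp [hMt], sub_zero] at hFTC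
  have hcont : ∀ β, ContinuousOn (wickMonomial Mt β) (uIcc 0 t) := fun β =>
    (absolutelyContinuousOnInterval_wickMonomial hMac β).continuousOn
  rw [← hFTC, intervalIntegral.integral_finsetSum fun k _ =>
    ((hm k).continuousOn_mul (hcont _)).const_mul _]
  refine Finset.sum_congr rfl fun k _ => ?_
  rw [intervalIntegral.integral_const_mul, setIntegral_Ioo_eq_intervalIntegral ht.1]

/-- The chaos coefficients of the Wick exponential,
`u_α(t) = (Π_k M̃_k(t)^{α_k})/√(α!)` with `M̃_k(t) = ∫_0^t m̃_k(s) ds`, solve the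
propagator system of the Itô–Skorokhod equation `u(t) = 1 + 𝔛_t^⋄(u)`: `u_𝟎 ≡ 1` and,
for `|α| ≥ 1` and every `t ∈ [0, T]`,
`u_α(t) = Σ_k √(α_k) ∫_0^t u_{α−ε_k}(s) m̃_k(s) ds`. -/
theorem wick_exponential_solves_propagator
    (T : ℝ) (hT : 0 < T) (mt : ℕ → ℝ → ℝ)
    (hmt : ∀ k, MemLp (mt k) 2 (volume.restrict (Ioo 0 T)))
    (Mt : ℕ → ℝ → ℝ) (hMt : ∀ k t, Mt k t = ∫ s in Ioo 0 t, mt k s)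
    (u : (ℕ →₀ ℕ) → ℝ → ℝ)
    (hu : ∀ α t, u α t =
      (∏ k ∈ α.support, (Mt k t) ^ (α k)) /
        Real.sqrt (∏ k ∈ α.support, (Nat.factorial (α k) : ℝ))) :
    (∀ t : ℝ, u 0 t = 1) ∧
    (∀ α : ℕ →₀ ℕ, α ≠ 0 → ∀ t ∈ Icc (0 : ℝ) T,
      u α t = ∑ k ∈ α.support, Real.sqrt (α k) *
        ∫ s in Ioo 0 t, u (α - Finsupp.single k 1) s * mt k s) :=
  wick_exponential_solves_propagator_general T mt hmt Mt hMt u hu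
end
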